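/- arXiv:1011.3245 — 5 statements merged into one kernel-verified Lean document; each statement's English description precedes it below -/
import Mathlib

section
/- For every m×m unitary matrix U and all polynomials p, q in m complex variables, ⟨U[p], U[q]⟩ = ⟨p,q⟩, where ⟨·,·⟩ is the Fock inner product. -/
/-- The Fock inner product of two polynomials `p = ∑_S a_S x^S`, `q = ∑_S b_S x^S` in `m`
complex variables: `⟨p,q⟩ := ∑_S conj(a_S)·b_S·s₁!⋯s_m!`. -/
noncomputable def fock {m : ℕ} (p q : MvPolynomial (Fin m) ℂ) : ℂ :=
  ∑ S ∈ p.support ∪ q.support,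
    (starRingEnd ℂ) (MvPolynomial.coeff S p) * MvPolynomial.coeff S q *
      ∏ i, ((S i).factorial : ℂ)

/-- `L[p]`: the polynomial `p(Lx)`, obtained by substituting `x_i ↦ ∑_j L_{ij} x_j` in `p`. -/
noncomputable def substL {m : ℕ} (L : Matrix (Fin m) (Fin m) ℂ)
    (p : MvPolynomial (Fin m) ℂ) : MvPolynomial (Fin m) ℂ :=
  MvPolynomial.aeval (fun i => ∑ j, MvPolynomial.C (L i j) * MvPolynomial.X j) p

/-
Multiplication by `x_j` is adjoint to `∂/∂x_j` for the Fock inner product, because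
`(S + e_j)! = (S_j + 1) · S!`. As `U[p · x_i] = U[p] · ∑_j U_{ij} x_j`, the adjoint of multiplication
by this linear form is `∑_j conj(U_{ij}) ∂_j`, and by the chain rule and `U Uᴴ = 1` this operator
sends `U[q]` to `U[∂_i q]`. Hence `⟨U[p x_i], U[q]⟩ = ⟨U[p], U[∂_i q]⟩ = ⟨p, ∂_i q⟩ = ⟨p x_i, q⟩`
by induction, and for constants both sides are `conj(p) · q(0)`.
-/

open MvPolynomial ComplexConjugate

lemma pderiv_aeval {R σ τ : Type*} [CommSemiring R] [Fintype σ] (g : σ → MvPolynomial τ R)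
    (j : τ) (q : MvPolynomial σ R) :
    pderiv j (aeval g q) = ∑ k, pderiv j (g k) * aeval g (pderiv k q) := by
  classical
  induction q using MvPolynomial.induction_on with
  | C a => simp
  | add p q hp hq => simp only [map_add, hp, hq, mul_add, Finset.sum_add_distrib]
  | mul_X p i hp =>
    simp only [map_mul, aeval_X, pderiv_mul, hp, map_add, mul_add, Finset.sum_add_distrib,
      Finset.sum_mul]
    simp [pderiv_X, Pi.single_apply, mul_comm, mul_assoc]

lemma prod_factorial_add_single {ι : Type*} [Fintype ι] [DecidableEq ι] (S : ι →₀ ℕ) (j : ι) :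
    ∏ i, ((S + Finsupp.single j 1 : ι →₀ ℕ) i).factorial = (S j + 1) * ∏ i, (S i).factorial := by
  rw [← Finset.mul_prod_erase _ _ (Finset.mem_univ j),
    ← Finset.mul_prod_erase _ (fun i => (S i).factorial) (Finset.mem_univ j),
    Finset.prod_congr rfl fun i hi => by
      rw [Finsupp.add_apply, Finsupp.single_eq_of_ne (Finset.ne_of_mem_erase hi), add_zero]]
  simp [Nat.factorial_succ, mul_assoc]

section Fock

variable {m : ℕ}

lemma fock_eq_sum_of_support_subset {p : MvPolynomial (Fin m) ℂ} {A : Finset (Fin m →₀ ℕ)}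
    (hA : p.support ⊆ A) (q : MvPolynomial (Fin m) ℂ) :
    fock p q = ∑ S ∈ A, conj (coeff S p) * coeff S q * ∏ i, ((S i).factorial : ℂ) := by
  have vanish : ∀ B : Finset (Fin m →₀ ℕ), p.support ⊆ B →
      ∑ S ∈ B, conj (coeff S p) * coeff S q * ∏ i, ((S i).factorial : ℂ) =
        ∑ S ∈ p.support, conj (coeff S p) * coeff S q * ∏ i, ((S i).factorial : ℂ) :=
    fun B hB => (Finset.sum_subset hB fun S _ hS => by simp [notMem_support_iff.mp hS]).symm
  rw [fock, vanish _ Finset.subset_union_left, vanish _ hA]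

lemma fock_eq_sum_support (p q : MvPolynomial (Fin m) ℂ) :
    fock p q = ∑ S ∈ p.support, conj (coeff S p) * coeff S q * ∏ i, ((S i).factorial : ℂ) :=
  fock_eq_sum_of_support_subset subset_rfl q

lemma fock_add_left (p₁ p₂ q : MvPolynomial (Fin m) ℂ) :
    fock (p₁ + p₂) q = fock p₁ q + fock p₂ q := by
  rw [fock_eq_sum_of_support_subset support_add,
    fock_eq_sum_of_support_subset Finset.subset_union_left,
    fock_eq_sum_of_support_subset Finset.subset_union_right, ← Finset.sum_add_distrib]
  simp only [coeff_add, map_add, add_mul]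

lemma fock_smul_left (c : ℂ) (p q : MvPolynomial (Fin m) ℂ) :
    fock (c • p) q = conj c * fock p q := by
  rw [fock_eq_sum_of_support_subset support_smul, fock_eq_sum_support, Finset.mul_sum]
  simp only [coeff_smul, smul_eq_mul, map_mul, mul_assoc]

lemma fock_add_right (p q₁ q₂ : MvPolynomial (Fin m) ℂ) :
    fock p (q₁ + q₂) = fock p q₁ + fock p q₂ := by
  simp only [fock_eq_sum_support p, coeff_add, mul_add, add_mul, Finset.sum_add_distrib]

lemma fock_smul_right (c : ℂ) (p q : MvPolynomial (Fin m) ℂ) :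
    fock p (c • q) = c * fock p q := by
  simp only [fock_eq_sum_support p, Finset.mul_sum, coeff_smul, smul_eq_mul]
  exact Finset.sum_congr rfl fun S _ => by ring

noncomputable def fockForm : MvPolynomial (Fin m) ℂ →ₗ⋆[ℂ] MvPolynomial (Fin m) ℂ →ₗ[ℂ] ℂ :=
  LinearMap.mk₂'ₛₗ (starRingEnd ℂ) (RingHom.id ℂ) fock fock_add_left fock_smul_left
    fock_add_right fock_smul_right

lemma fock_sum_left {ι : Type*} (s : Finset ι) (p : ι → MvPolynomial (Fin m) ℂ)
    (q : MvPolynomial (Fin m) ℂ) : fock (∑ i ∈ s, p i) q = ∑ i ∈ s, fock (p i) q :=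
  map_sum (fockForm.flip q) p s

lemma fock_sum_right {ι : Type*} (s : Finset ι) (p : MvPolynomial (Fin m) ℂ)
    (q : ι → MvPolynomial (Fin m) ℂ) : fock p (∑ i ∈ s, q i) = ∑ i ∈ s, fock p (q i) :=
  map_sum (fockForm p) q s

lemma fock_C_left (a : ℂ) (q : MvPolynomial (Fin m) ℂ) :
    fock (C a) q = conj a * constantCoeff q := by
  have h : (C a : MvPolynomial (Fin m) ℂ).support ⊆ {0} := support_monomial_subset
  rw [fock_eq_sum_of_support_subset h, Finset.sum_singleton]
  simp [coeff_C, constantCoeff_eq]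

lemma fock_mul_X_left (p q : MvPolynomial (Fin m) ℂ) (j : Fin m) :
    fock (p * X j) q = fock p (pderiv j q) := by
  rw [fock_eq_sum_support, support_mul_X, Finset.sum_map, fock_eq_sum_support]
  refine Finset.sum_congr rfl fun S _ => ?_
  rw [addRightEmbedding_apply, coeff_mul_X, coeff_pderiv, ← Nat.cast_prod,
    prod_factorial_add_single]
  push_cast
  ring

lemma fock_mul_sum_C_mul_X_left (p q : MvPolynomial (Fin m) ℂ) (c : Fin m → ℂ) :
    fock (p * ∑ j, C (c j) * X j) q = fock p (∑ j, conj (c j) • pderiv j q) := by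
  simp only [Finset.mul_sum, ← smul_eq_C_mul, mul_smul_comm, fock_sum_left, fock_sum_right,
    fock_smul_left, fock_smul_right, fock_mul_X_left]

end Fock

section Substitution

variable {m : ℕ} (L : Matrix (Fin m) (Fin m) ℂ)

lemma substL_C (a : ℂ) : substL L (C a) = C a := aeval_C _ _

lemma substL_add (p q : MvPolynomial (Fin m) ℂ) :
    substL L (p + q) = substL L p + substL L q := map_add _ _ _

lemma substL_mul_X (p : MvPolynomial (Fin m) ℂ) (i : Fin m) :
    substL L (p * X i) = substL L p * ∑ j, C (L i j) * X j := by
  rw [substL, map_mul, aeval_X, ← substL]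

lemma constantCoeff_substL (q : MvPolynomial (Fin m) ℂ) :
    constantCoeff (substL L q) = constantCoeff q := by
  induction q using MvPolynomial.induction_on with
  | C a => rw [substL_C]
  | add p q hp hq => rw [substL_add, map_add, map_add, hp, hq]
  | mul_X p i _ => simp [substL_mul_X]

lemma pderiv_substL (j : Fin m) (q : MvPolynomial (Fin m) ℂ) :
    pderiv j (substL L q) = ∑ k, L k j • substL L (pderiv k q) := by
  rw [substL, pderiv_aeval]
  simp [pderiv_X, Pi.single_apply, smul_eq_C_mul, substL]

lemma sum_star_smul_pderiv_substL {U : Matrix (Fin m) (Fin m) ℂ}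
    (hU : U ∈ Matrix.unitaryGroup (Fin m) ℂ) (i : Fin m) (q : MvPolynomial (Fin m) ℂ) :
    ∑ j, conj (U i j) • pderiv j (substL U q) = substL U (pderiv i q) := by
  have unitary : ∀ k, ∑ j, U k j * conj (U i j) = if k = i then 1 else 0 := fun k => by
    simpa [Matrix.mul_apply, Matrix.one_apply] using
      congrFun₂ (Matrix.mem_unitaryGroup_iff.mp hU) k i
  calc ∑ j, conj (U i j) • pderiv j (substL U q)
      = ∑ k, (∑ j, U k j * conj (U i j)) • substL U (pderiv k q) := by
        simp only [pderiv_substL, Finset.smul_sum, Finset.sum_smul, smul_smul, mul_comm]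
        exact Finset.sum_comm
    _ = substL U (pderiv i q) := by simp [unitary]

end Substitution

/-- **Unitary invariance of the Fock inner product.**
`⟨U[p], U[q]⟩ = ⟨p,q⟩` for every `m×m` unitary `U` and all polynomials `p, q`. -/
theorem fock_unitary_invariant (m : ℕ) (U : Matrix (Fin m) (Fin m) ℂ)
    (hU : U ∈ Matrix.unitaryGroup (Fin m) ℂ) (p q : MvPolynomial (Fin m) ℂ) :
    fock (substL U p) (substL U q) = fock p q := by
  induction p using MvPolynomial.induction_on generalizing q with
  | C a => rw [substL_C, fock_C_left, fock_C_left, constantCoeff_substL]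
  | add p₁ p₂ h₁ h₂ => rw [substL_add, fock_add_left, fock_add_left, h₁, h₂]
  | mul_X p i ih =>
    calc fock (substL U (p * X i)) (substL U q)
        = fock (substL U p) (∑ j, conj (U i j) • pderiv j (substL U q)) := by
          rw [substL_mul_X, fock_mul_sum_C_mul_X_left]
      _ = fock (substL U p) (substL U (pderiv i q)) := by rw [sum_star_smul_pderiv_substL hU]
      _ = fock p (pderiv i q) := ih _
      _ = fock (p * X i) q := (fock_mul_X_left p q i).symm
end

section
/- Let 1 ≤ n ≤ m and let U = (u_{ij}) be an m×m unitary matrix. Write the polynomial ∏_{i=1}^n (u_{i1}x₁ + ⋯ + u_{im}x_m) as ∑_S a_S x^S, the sum ranging over monomials x^S = x₁^{s₁}⋯x_m^{s_m} with s₁+⋯+s_m = n. Then ∑_S |a_S|²·s₁!⋯s_m! = 1; equivalently, ⟨U[x₁⋯x_n], U[x₁⋯x_n]⟩ = 1 where ⟨·,·⟩ is the Fock inner product. -/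
open MvPolynomial Finset Equiv
open scoped Matrix

section FiberCard

variable {α β : Type*} [Fintype α]

noncomputable def fiberCard (f : α → β) : β →₀ ℕ := ∑ a, Finsupp.single (f a) 1

theorem fiberCard_apply [DecidableEq β] (f : α → β) (b : β) :
    fiberCard f b = Fintype.card {a // f a = b} := by
  simp only [fiberCard, Finsupp.finsetSum_apply, Finsupp.single_apply, Fintype.card_subtype,
    card_filter]

theorem fiberCard_comp_perm (f : α → β) (σ : Perm α) : fiberCard (f ∘ σ) = fiberCard f :=
  Fintype.sum_equiv σ _ _ fun _ => rfl

variable [DecidableEq α] [Fintype β] [DecidableEq β]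

theorem card_perm_comp_eq (f g : α → β) :
    Fintype.card {σ : Perm α // g ∘ σ = f} =
      if fiberCard f = fiberCard g then ∏ b, (fiberCard f b).factorial else 0 := by
  split_ifs with h
  · have hcard (b : β) : Fintype.card {a // f a = b} = Fintype.card {a // g a = b} := by
      rw [← fiberCard_apply, ← fiberCard_apply, h]
    let τ : Perm α := ofFiberEquiv fun b => Fintype.equivOfCardEq (hcard b)
    have hτ : g ∘ τ = f := funext (ofFiberEquiv_map _)
    have e : {σ : Perm α // g ∘ σ = f} ≃ {σ : Perm α // f ∘ σ = f} :=
      (Equiv.mulLeft τ⁻¹).subtypeEquiv fun σ => by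
        rw [← hτ]
        simp only [Function.comp_def, coe_mulLeft, Perm.coe_mul, Perm.coe_inv, apply_symm_apply]
    rw [Fintype.card_congr e, DomMulAct.stabilizer_card]
    simp only [fiberCard_apply]
  · rw [Fintype.card_eq_zero_iff]
    exact ⟨fun ⟨σ, hσ⟩ => h (by rw [← hσ, fiberCard_comp_perm])⟩

end FiberCard

section LinearForm

variable {σ R ι : Type*} [CommSemiring R] [Fintype σ] [Fintype ι]

noncomputable def linearForm (a : σ → R) : MvPolynomial σ R := ∑ j, C (a j) * X j

theorem prod_linearForm [DecidableEq ι] (A : Matrix ι σ R) :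
    ∏ i, linearForm (A i) = ∑ f : ι → σ, monomial (fiberCard f) (∏ i, A i (f i)) := by
  simp only [linearForm, C_mul_X_eq_monomial, Fintype.prod_sum, fiberCard, monomial_sum_prod]

end LinearForm

theorem substL_prod_X {m : ℕ} {ι : Type*} [Fintype ι] (L : Matrix (Fin m) (Fin m) ℂ)
    (c : ι → Fin m) : substL L (∏ i, X (c i)) = ∏ i, linearForm (L (c i)) := by
  simp only [substL, map_prod, aeval_X, linearForm]

theorem sum_star_prod_comp_perm_mul_prod {ι κ R : Type*} [Fintype ι] [DecidableEq ι]
    [Fintype κ] [CommSemiring R] [StarRing R] (A B : Matrix ι κ R) (σ : Perm ι) :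
    ∑ g : ι → κ, star (∏ i, A i (g (σ i))) * ∏ i, B i (g i) = ∏ i, (B * Aᴴ) (σ i) i := by
  have hA (g : ι → κ) : star (∏ i, A i (g (σ i))) = ∏ i, star (A (σ.symm i) (g i)) := by
    rw [star_prod]
    exact Fintype.prod_equiv σ _ _ fun i => by simp
  simp_rw [hA, ← prod_mul_distrib]
  rw [← Fintype.prod_sum fun i k => star (A (σ.symm i) k) * B i k]
  refine Fintype.prod_equiv σ.symm _ _ fun i => ?_
  simp only [mul_comm, apply_symm_apply, Matrix.mul_apply, Matrix.conjTranspose_apply]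

section Fock

variable {m : ℕ}

theorem fock_eq_sum_of_subset {p q : MvPolynomial (Fin m) ℂ} {s : Finset (Fin m →₀ ℕ)}
    (hp : p.support ⊆ s) (hq : q.support ⊆ s) :
    fock p q = ∑ S ∈ s, starRingEnd ℂ (coeff S p) * coeff S q * ∏ i, ((S i).factorial : ℂ) := by
  refine sum_subset (union_subset hp hq) fun S _ hS => ?_
  rw [notMem_support_iff.mp fun h => hS (mem_union_left _ h), map_zero, zero_mul, zero_mul]

theorem fock_sum_monomial {ι : Type*} [Fintype ι] (e : ι → (Fin m →₀ ℕ)) (a b : ι → ℂ) :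
    fock (∑ i, monomial (e i) (a i)) (∑ i, monomial (e i) (b i)) =
      ∑ i, ∑ j, if e i = e j then starRingEnd ℂ (a i) * b j * ∏ k, ((e i k).factorial : ℂ)
        else 0 := by
  classical
  have hsupp (c : ι → ℂ) : (∑ i, monomial (e i) (c i)).support ⊆ univ.image e :=
    support_sum.trans <| biUnion_subset.2 fun i _ =>
      support_monomial_subset.trans <| singleton_subset_iff.2 <| mem_image_of_mem e (mem_univ i)
  have hcoeff (c : ι → ℂ) (S : Fin m →₀ ℕ) :
      coeff S (∑ i, monomial (e i) (c i)) = ∑ i, if e i = S then c i else 0 := by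
    simp only [coeff_sum, coeff_monomial]
  have hterm (S : Fin m →₀ ℕ) (i j : ι) :
      (if e i = S then starRingEnd ℂ (a i) else 0) * (if e j = S then b j else 0) *
          ∏ k, ((S k).factorial : ℂ) =
        if S = e i then (if e i = e j then starRingEnd ℂ (a i) * b j *
          ∏ k, ((e i k).factorial : ℂ) else 0) else 0 := by
    by_cases hi : e i = S
    · subst hi
      by_cases hj : e i = e j <;> simp [hj, eq_comm]
    · simp [hi, Ne.symm hi]
  rw [fock_eq_sum_of_subset (hsupp a) (hsupp b)]
  simp only [hcoeff, map_sum, apply_ite, map_zero]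
  simp_rw [sum_mul_sum, sum_mul, hterm]
  rw [sum_comm]
  refine sum_congr rfl fun i _ => ?_
  rw [sum_comm]
  exact sum_congr rfl fun j _ =>
    (sum_ite_eq' _ _ _).trans (if_pos (mem_image_of_mem e (mem_univ i)))

theorem fock_prod_linearForm {ι : Type*} [Fintype ι] [DecidableEq ι]
    (A B : Matrix ι (Fin m) ℂ) :
    fock (∏ i, linearForm (A i)) (∏ i, linearForm (B i)) = (B * Aᴴ).permanent := by
  have hcount (f g : ι → Fin m) (z : ℂ) :
      (if fiberCard f = fiberCard g then z * ∏ k, ((fiberCard f k).factorial : ℂ) else 0) =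
        ∑ σ : Perm ι, if g ∘ σ = f then z else 0 := by
    rw [sum_ite, sum_const_zero, add_zero, sum_const, ← Fintype.card_subtype, card_perm_comp_eq]
    split_ifs <;> simp [mul_comm]
  rw [prod_linearForm, prod_linearForm, fock_sum_monomial]
  simp_rw [hcount]
  calc _ = ∑ σ : Perm ι, ∑ g : ι → Fin m, starRingEnd ℂ (∏ i, A i (g (σ i))) * ∏ i, B i (g i) := by
        rw [sum_comm]
        refine (sum_congr rfl fun g _ => sum_comm).trans (sum_comm.trans ?_)
        refine sum_congr rfl fun σ _ => sum_congr rfl fun g _ => ?_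
        rw [sum_ite_eq, if_pos (mem_univ _)]
        rfl
    _ = _ := by simp only [starRingEnd_apply, sum_star_prod_comp_perm_mul_prod, Matrix.permanent]

end Fock

theorem fock_norm_substL_one_general (m n : ℕ) (hnm : n ≤ m)
    (U : Matrix (Fin m) (Fin m) ℂ) (hU : U ∈ Matrix.unitaryGroup (Fin m) ℂ) :
    fock (substL U (∏ i : Fin n, MvPolynomial.X (Fin.castLE hnm i)))
      (substL U (∏ i : Fin n, MvPolynomial.X (Fin.castLE hnm i))) = 1 := by
  set V := U.submatrix (Fin.castLE hnm) id
  have hV : V * Vᴴ = 1 := by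
    rw [Matrix.conjTranspose_submatrix, ← Matrix.submatrix_mul _ _ _ _ _ Function.bijective_id,
      ← Matrix.star_eq_conjTranspose, Matrix.mem_unitaryGroup_iff.mp hU,
      Matrix.submatrix_one _ (Fin.castLE_injective hnm)]
  rw [substL_prod_X]
  exact (fock_prod_linearForm V V).trans (by rw [hV, Matrix.permanent_one])

/-- For `1 ≤ n ≤ m` and `U` an `m×m` unitary matrix,
`⟨U[x₁⋯x_n], U[x₁⋯x_n]⟩ = 1`; equivalently, writing `U[x₁⋯x_n] = ∑_S a_S x^S`, one has
`∑_S |a_S|²·s₁!⋯s_m! = 1`. -/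
theorem fock_norm_substL_one (m n : ℕ) (hn : 1 ≤ n) (hnm : n ≤ m)
    (U : Matrix (Fin m) (Fin m) ℂ) (hU : U ∈ Matrix.unitaryGroup (Fin m) ℂ) :
    fock (substL U (∏ i : Fin n, MvPolynomial.X (Fin.castLE hnm i)))
      (substL U (∏ i : Fin n, MvPolynomial.X (Fin.castLE hnm i))) = 1 :=
  fock_norm_substL_one_general m n hnm U hU
end

section
/- Let 1 ≤ n ≤ m and let V be an m×m complex matrix. Then Per(V_{n,n}) = ⟨x₁⋯x_n, V[x₁⋯x_n]⟩, where V_{n,n} denotes the top-left n×n submatrix of V and ⟨·,·⟩ is the Fock inner product. -/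
/-- The permanent of an `n×n` complex matrix: `Per(A) = ∑_{σ ∈ S_n} ∏_i A i (σ i)`. -/
noncomputable def perm {n : ℕ} (A : Matrix (Fin n) (Fin n) ℂ) : ℂ :=
  ∑ σ : Equiv.Perm (Fin n), ∏ i, A i (σ i)

open MvPolynomial Finset

lemma prod_monomial' {m : ℕ} {ι : Type*} (s : Finset ι) (d : ι → (Fin m →₀ ℕ)) (c : ι → ℂ) :
    ∏ i ∈ s, (monomial (d i) (c i) : MvPolynomial (Fin m) ℂ) =
      monomial (∑ i ∈ s, d i) (∏ i ∈ s, c i) := by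
  induction s using Finset.cons_induction with
  | empty => simp
  | cons a s ha ih =>
    rw [Finset.prod_cons, ih, Finset.sum_cons, Finset.prod_cons, monomial_mul]

lemma count_apply {m n : ℕ} (h : Fin n → Fin m) (j : Fin m) :
    (∑ i : Fin n, Finsupp.single (h i) 1) j = (univ.filter fun i => h i = j).card := by
  rw [Finset.sum_apply', Finset.card_filter]
  simp [Finsupp.single_apply]

lemma key_coeff (m n : ℕ) (hnm : n ≤ m)
    (V : Matrix (Fin m) (Fin m) ℂ) :
    (∑ σ : Equiv.Perm (Fin n), ∏ i, V (Fin.castLE hnm i) (Fin.castLE hnm (σ i))) =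
      MvPolynomial.coeff (∑ i : Fin n, Finsupp.single (Fin.castLE hnm i) 1)
        ((MvPolynomial.aeval (fun i => ∑ j, MvPolynomial.C (V i j) * MvPolynomial.X j) :
            MvPolynomial (Fin m) ℂ →ₐ[ℂ] MvPolynomial (Fin m) ℂ)
          (∏ i : Fin n, MvPolynomial.X (Fin.castLE hnm i))) := by
  set S0 : Fin m →₀ ℕ := ∑ i : Fin n, Finsupp.single (Fin.castLE hnm i) 1 with hS0
  have hS0count : ∀ j, S0 j = (univ.filter fun i => Fin.castLE hnm i = j).card :=
    fun j => count_apply _ j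
  have hq : ((MvPolynomial.aeval (fun i => ∑ j, MvPolynomial.C (V i j) * MvPolynomial.X j) :
            MvPolynomial (Fin m) ℂ →ₐ[ℂ] MvPolynomial (Fin m) ℂ)
          (∏ i : Fin n, MvPolynomial.X (Fin.castLE hnm i)) : MvPolynomial (Fin m) ℂ) =
      ∑ g ∈ Fintype.piFinset (fun _ : Fin n => (univ : Finset (Fin m))),
        monomial (∑ i : Fin n, Finsupp.single (g i) 1) (∏ i, V (Fin.castLE hnm i) (g i)) := by
    rw [map_prod]
    simp only [aeval_X]
    rw [Finset.prod_univ_sum]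
    refine Finset.sum_congr rfl fun g _ => ?_
    rw [← prod_monomial']
    refine Finset.prod_congr rfl fun i _ => ?_
    rw [X, C_mul_monomial, mul_one]
  rw [hq, coeff_sum]
  simp only [coeff_monomial]
  rw [← Finset.sum_filter]
  have hcount : ∀ (g : Fin n → Fin m), (∑ i : Fin n, Finsupp.single (g i) 1) = S0 →
      ∀ j, (univ.filter fun i => g i = j).card =
        (univ.filter fun i => Fin.castLE hnm i = j).card := by
    intro g hg j
    rw [← count_apply, hg, hS0count]
  have hcastcard : ∀ j : Fin m, (univ.filter fun i => Fin.castLE hnm i = j).card ≤ 1 :=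
    fun j => Finset.card_le_one.mpr fun x hx y hy => by
      simp only [Finset.mem_filter] at hx hy
      exact Fin.castLE_injective hnm (hx.2.trans hy.2.symm)
  refine Finset.sum_bij (fun σ _ => Fin.castLE hnm ∘ σ) ?_ ?_ ?_ ?_
  · intro σ _
    rw [Finset.mem_filter]
    refine ⟨by simp, ?_⟩
    simpa using Equiv.sum_comp σ (fun i => Finsupp.single (Fin.castLE hnm i) 1)
  · intro σ _ τ _ h
    exact Equiv.coe_fn_injective (funext fun i => Fin.castLE_injective hnm (congrFun h i))
  · intro g hg
    rw [Finset.mem_filter] at hg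
    have hc := hcount g hg.2
    have hlt : ∀ i, (g i : ℕ) < n := by
      intro i
      have h1 : 0 < (univ.filter fun i' => Fin.castLE hnm i' = g i).card := by
        rw [← hc (g i)]
        exact Finset.card_pos.mpr ⟨i, by simp⟩
      obtain ⟨i', hi'⟩ := Finset.card_pos.mp h1
      rw [Finset.mem_filter] at hi'
      have := hi'.2
      have : (g i : ℕ) = (i' : ℕ) := by rw [← this]; rfl
      rw [this]; exact i'.isLt
    have hinj : Function.Injective g := by
      intro a b hab
      have hle : (univ.filter fun i' => g i' = g a).card ≤ 1 := by
        rw [hc (g a)]; exact hcastcard _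
      exact Finset.card_le_one.mp hle a (by simp) b (by simp [hab])
    set g' : Fin n → Fin n := fun i => ⟨g i, hlt i⟩ with hg'
    have hinj' : Function.Injective g' := by
      intro a b hab
      apply hinj
      have := congrArg Fin.val hab
      exact Fin.ext this
    have hbij := (Finite.injective_iff_bijective).mp hinj'
    refine ⟨Equiv.ofBijective g' hbij, by simp, ?_⟩
    funext i
    exact Fin.ext rfl
  · intro σ _
    rfl

/-- For `1 ≤ n ≤ m` and any `m×m` complex matrix `V`,
`Per(V_{n,n}) = ⟨x₁⋯x_n, V[x₁⋯x_n]⟩`, where `V_{n,n}` is the top-left `n×n` submatrix of `V`. -/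
theorem perm_topLeft_eq_fock (m n : ℕ) (hn : 1 ≤ n) (hnm : n ≤ m)
    (V : Matrix (Fin m) (Fin m) ℂ) :
    perm (V.submatrix (Fin.castLE hnm) (Fin.castLE hnm)) =
      fock (∏ i : Fin n, MvPolynomial.X (Fin.castLE hnm i))
        (substL V (∏ i : Fin n, MvPolynomial.X (Fin.castLE hnm i))) := by
  classical
  set S0 : Fin m →₀ ℕ := ∑ i : Fin n, Finsupp.single (Fin.castLE hnm i) 1 with hS0
  have hp : (∏ i : Fin n, MvPolynomial.X (Fin.castLE hnm i) : MvPolynomial (Fin m) ℂ)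
      = monomial S0 1 := by
    have := prod_monomial' (univ : Finset (Fin n))
      (fun i => Finsupp.single (Fin.castLE hnm i) 1) (fun _ => (1 : ℂ))
    simpa [X] using this
  have hS0le : ∀ j, S0 j ≤ 1 := by
    intro j
    rw [hS0, count_apply]
    exact Finset.card_le_one.mpr fun x hx y hy => by
      simp only [Finset.mem_filter] at hx hy
      exact Fin.castLE_injective hnm (hx.2.trans hy.2.symm)
  have hfact : (∏ i, ((S0 i).factorial : ℂ)) = 1 := by
    apply Finset.prod_eq_one
    intro j _
    rcases Nat.le_one_iff_eq_zero_or_eq_one.mp (hS0le j) with h | h <;> rw [h] <;> norm_num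
  set q := substL V (∏ i : Fin n, MvPolynomial.X (Fin.castLE hnm i)) with hqdef
  have hsum : fock (∏ i : Fin n, MvPolynomial.X (Fin.castLE hnm i)) q =
      MvPolynomial.coeff S0 q := by
    rw [fock, hp]
    rw [Finset.sum_eq_single S0]
    · rw [coeff_monomial, if_pos rfl, map_one, one_mul, hfact, mul_one]
    · intro S _ hS
      rw [coeff_monomial, if_neg (Ne.symm hS), map_zero, zero_mul, zero_mul]
    · intro h
      exact absurd (Finset.mem_union_left _ (by
        rw [mem_support_iff, coeff_monomial, if_pos rfl]; exact one_ne_zero)) h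
  rw [hsum]
  have := key_coeff m n hnm V
  rw [perm]
  simp only [Matrix.submatrix_apply]
  exact this
end

section
/- For every n×n complex matrix V = (v_{ij}), Per(V) = 2^{-n} · ∑_{x∈{-1,1}^n} x₁⋯x_n · ∏_{i=1}^n (v_{i1}x₁ + ⋯ + v_{in}x_n); that is, Per(V) equals the expectation of x₁⋯x_n·∏_{i=1}^n (∑_j v_{ij}x_j) over x drawn uniformly from {-1,1}^n. -/
/-- **Ryser's formula as an expectation over `{-1,1}^n`.**
`Per(V) = 2^{-n} ∑_{x ∈ {-1,1}^n} x₁⋯x_n ∏_{i=1}^n (∑_j v_{ij} x_j)`. -/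
theorem ryser_formula (n : ℕ) (V : Matrix (Fin n) (Fin n) ℂ) :
    perm V = (2 ^ n : ℂ)⁻¹ *
      ∑ x ∈ Fintype.piFinset (fun _ : Fin n => ({-1, 1} : Finset ℂ)),
        (∏ i, x i) * ∏ i, ∑ j, V i j * x j := by
  set S := Fintype.piFinset (fun _ : Fin n => ({-1, 1} : Finset ℂ)) with hS
  have key : ∀ f : Fin n → Fin n,
      (∑ x ∈ S, (∏ i, x i) * ∏ i, x (f i))
        = if Function.Bijective f then (2 : ℂ) ^ n else 0 := by
    intro f
    have h1 : ∀ x : Fin n → ℂ, ((∏ i, x i) * ∏ i, x (f i))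
        = ∏ j, x j ^ ((Finset.univ.filter fun i => f i = j).card + 1) := by
      intro x
      have hfib : (∏ i, x (f i))
          = ∏ j, x j ^ ((Finset.univ.filter fun i => f i = j).card) := by
        rw [← Finset.prod_fiberwise_of_maps_to (fun i _ => Finset.mem_univ (f i))
          (fun i => x (f i))]
        refine Finset.prod_congr rfl fun j _ => ?_
        rw [Finset.prod_congr rfl (fun i hi => show x (f i) = x j by
          simp only [Finset.mem_filter] at hi; rw [hi.2]), Finset.prod_const]
      rw [hfib, ← Finset.prod_mul_distrib]
      exact Finset.prod_congr rfl fun j _ => by ring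
    simp_rw [h1, hS]
    rw [← Finset.prod_univ_sum (fun _ : Fin n => ({-1, 1} : Finset ℂ))
      (fun j a => a ^ ((Finset.univ.filter fun i => f i = j).card + 1))]
    have h2 : ∀ j : Fin n, (∑ a ∈ ({-1, 1} : Finset ℂ),
        a ^ ((Finset.univ.filter fun i => f i = j).card + 1))
        = (-1 : ℂ) ^ ((Finset.univ.filter fun i => f i = j).card + 1) + 1 := by
      intro j
      rw [Finset.sum_pair (by norm_num : (-1 : ℂ) ≠ 1), one_pow]
    simp_rw [h2]
    by_cases hf : Function.Bijective f
    · rw [if_pos hf]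
      have hcard : ∀ j : Fin n, (Finset.univ.filter fun i => f i = j).card = 1 := by
        intro j
        rw [Finset.card_eq_one]
        refine ⟨(Equiv.ofBijective f hf).symm j, ?_⟩
        ext i
        simp only [Finset.mem_filter, Finset.mem_univ, true_and, Finset.mem_singleton]
        constructor
        · intro h
          apply hf.injective
          rw [h]
          exact (Equiv.ofBijective_apply_symm_apply f hf j).symm
        · intro h
          subst h
          exact Equiv.ofBijective_apply_symm_apply f hf j
      rw [Finset.prod_congr rfl (fun j _ => show
          (-1 : ℂ) ^ ((Finset.univ.filter fun i => f i = j).card + 1) + 1 = 2 by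
          rw [hcard j]; norm_num), Finset.prod_const, Finset.card_univ, Fintype.card_fin]
    · rw [if_neg hf]
      have hsurj : ¬ Function.Surjective f := fun hs =>
        hf (Finite.surjective_iff_bijective.mp hs)
      simp only [Function.Surjective, not_forall] at hsurj
      obtain ⟨j, hj⟩ := hsurj
      push_neg at hj
      apply Finset.prod_eq_zero (Finset.mem_univ j)
      have hz : (Finset.univ.filter fun i => f i = j).card = 0 := by
        rw [Finset.card_eq_zero]
        ext i; simp [hj i]
      rw [hz]
      norm_num
  have expand : ∀ x : Fin n → ℂ, (∏ i, ∑ j, V i j * x j)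
      = ∑ f : Fin n → Fin n, ∏ i, V i (f i) * x (f i) := by
    intro x
    rw [Finset.prod_univ_sum, Fintype.piFinset_univ]
  have main : (∑ x ∈ S, (∏ i, x i) * ∏ i, ∑ j, V i j * x j)
      = (2 : ℂ) ^ n * perm V := by
    simp_rw [expand, Finset.mul_sum]
    rw [Finset.sum_comm]
    have hterm : ∀ f : Fin n → Fin n,
        (∑ x ∈ S, (∏ i, x i) * ∏ i, V i (f i) * x (f i))
        = if Function.Bijective f then (2:ℂ)^n * ∏ i, V i (f i) else 0 := by
      intro f
      have : (∑ x ∈ S, (∏ i, x i) * ∏ i, V i (f i) * x (f i))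
          = (∏ i, V i (f i)) * ∑ x ∈ S, (∏ i, x i) * ∏ i, x (f i) := by
        rw [Finset.mul_sum]
        refine Finset.sum_congr rfl fun x _ => ?_
        rw [Finset.prod_mul_distrib]; ring
      rw [this, key f]
      split_ifs <;> ring
    rw [Finset.sum_congr rfl (fun f _ => hterm f)]
    rw [Finset.sum_ite, Finset.sum_const_zero, add_zero]
    rw [perm, Finset.mul_sum]
    refine Finset.sum_bij' (fun f hf => Equiv.ofBijective f
        (by simpa using Finset.mem_filter.mp hf |>.2))
      (fun σ _ => ⇑σ) (fun f hf => Finset.mem_univ _)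
      (fun σ _ => Finset.mem_filter.mpr ⟨Finset.mem_univ _, σ.bijective⟩)
      (fun f hf => rfl) (fun σ _ => by ext i; rfl) (fun f hf => rfl)
  rw [main, ← mul_assoc, inv_mul_cancel₀ (pow_ne_zero n two_ne_zero), one_mul]
end

section
/- Let V = (v_{ij}) be an n×n complex matrix, and for x ∈ {-1,1}^n define Rys_x(V) := x₁⋯x_n · ∏_{i=1}^n (v_{i1}x₁ + ⋯ + v_{in}x_n). Then |Rys_x(V)| ≤ ‖V‖^n for every x ∈ {-1,1}^n. -/
/-!
Since `|xᵢ| = 1`, `|Rys_x(V)| = ∏ᵢ |(Vx)ᵢ|`. By AM-GM applied to the squares `|(Vx)ᵢ|²`, this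
product is at most `(‖Vx‖² / n)^(n/2)`, and `‖Vx‖² ≤ ‖V‖² ‖x‖² = n ‖V‖²`.
-/

/-- The ℓ²→ℓ² operator norm of a complex square matrix (its largest singular value). -/
noncomputable def opNorm {n : ℕ} (A : Matrix (Fin n) (Fin n) ℂ) : ℝ :=
  ‖Matrix.toEuclideanCLM (𝕜 := ℂ) A‖

open Finset
open scoped Matrix

theorem Real.prod_le_pow_card_of_sum_le {ι : Type*} (s : Finset ι) {z : ι → ℝ}
    (hz : ∀ i ∈ s, 0 ≤ z i) {c : ℝ} (hsum : ∑ i ∈ s, z i ≤ #s * c) :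
    ∏ i ∈ s, z i ≤ c ^ #s := by
  rcases s.eq_empty_or_nonempty with rfl | hs
  · simp
  have hcard : (0 : ℝ) < #s := by exact_mod_cast hs.card_pos
  have hP : 0 ≤ ∏ i ∈ s, z i := prod_nonneg hz
  have amgm := Real.geom_mean_le_arith_mean s (fun _ ↦ 1) z (fun _ _ ↦ zero_le_one)
    (by simpa using hcard) hz
  simp only [Real.rpow_one, sum_const, nsmul_eq_mul, mul_one, one_mul] at amgm
  have hroot : (∏ i ∈ s, z i) ^ (#s : ℝ)⁻¹ ≤ c :=
    amgm.trans ((div_le_iff₀ hcard).2 (by linarith))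
  calc ∏ i ∈ s, z i = ((∏ i ∈ s, z i) ^ (#s : ℝ)⁻¹) ^ #s := by
        rw [← Real.rpow_natCast, ← Real.rpow_mul hP, inv_mul_cancel₀ hcard.ne', Real.rpow_one]
    _ ≤ c ^ #s := by gcongr

theorem Real.prod_le_pow_card_of_sum_sq_le {ι : Type*} (s : Finset ι) {a : ι → ℝ}
    (ha : ∀ i ∈ s, 0 ≤ a i) {c : ℝ} (hc : 0 ≤ c) (hsum : ∑ i ∈ s, a i ^ 2 ≤ #s * c ^ 2) :
    ∏ i ∈ s, a i ≤ c ^ #s := by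
  have hsq := Real.prod_le_pow_card_of_sum_le s (fun i _ ↦ sq_nonneg (a i)) hsum
  rw [prod_pow, ← pow_mul, mul_comm, pow_mul] at hsq
  exact (pow_le_pow_iff_left₀ (prod_nonneg ha) (by positivity) two_ne_zero).1 hsq

theorem Matrix.sum_norm_mulVec_sq_le {𝕜 n : Type*} [RCLike 𝕜] [Fintype n] [DecidableEq n]
    (A : Matrix n n 𝕜) (x : n → 𝕜) :
    ∑ i, ‖(A *ᵥ x) i‖ ^ 2 ≤ ‖toEuclideanCLM (𝕜 := 𝕜) A‖ ^ 2 * ∑ j, ‖x j‖ ^ 2 := by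
  have h := (toEuclideanCLM (𝕜 := 𝕜) A).le_opNorm (WithLp.toLp 2 x)
  rw [toEuclideanCLM_toLp] at h
  have h2 := pow_le_pow_left₀ (norm_nonneg _) h 2
  simpa only [mul_pow, EuclideanSpace.norm_sq_eq] using h2

/-- For every `x ∈ {-1,1}^n`,
`|Rys_x(V)| = |x₁⋯x_n ∏_i (∑_j v_{ij}x_j)| ≤ ‖V‖^n`. -/
theorem rys_le_opNorm_pow (n : ℕ) (V : Matrix (Fin n) (Fin n) ℂ) (x : Fin n → ℂ)
    (hx : ∀ i, x i = 1 ∨ x i = -1) :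
    ‖(∏ i, x i) * ∏ i, ∑ j, V i j * x j‖ ≤ opNorm V ^ n := by
  have hx1 : ∀ i, ‖x i‖ = 1 := fun i ↦ by rcases hx i with h | h <;> simp [h]
  have hsum : ∑ i, ‖(V *ᵥ x) i‖ ^ 2 ≤ (n : ℝ) * opNorm V ^ 2 := by
    simpa [hx1, mul_comm, opNorm] using V.sum_norm_mulVec_sq_le x
  calc ‖(∏ i, x i) * ∏ i, ∑ j, V i j * x j‖ = ∏ i, ‖(V *ᵥ x) i‖ := by
        simp [norm_prod, hx1, Matrix.mulVec, dotProduct]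
    _ ≤ opNorm V ^ n := by
        simpa using Real.prod_le_pow_card_of_sum_sq_le univ (a := fun i ↦ ‖(V *ᵥ x) i‖)
          (c := opNorm V) (fun i _ ↦ norm_nonneg _) (norm_nonneg _) (by simpa using hsum)
end
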